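/- Let p be an odd prime and q = mp + (p−1) for a positive integer m (so q > p and q is not divisible by p). Then for every g ∈ {2, 3, …, p−1} and every (τ1, τ2) ∈ Z_p ⊕ Z_q, m ≤ H_{g1}(τ1, τ2) ≤ m + 2. -/

import Mathlib

/-- The characteristic set `I_{g,p,q} = {(g·t mod p, t mod q) : 0 ≤ t < q}` in `Z_p ⊕ Z_q`. -/
def crtIdx (p q : ℕ) (g : ZMod p) : Finset (ZMod p × ZMod q) :=
  (Finset.range q).image (fun t : ℕ => ((g * (t : ZMod p), (t : ZMod q)) : ZMod p × ZMod q))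

/-- The CRT sequence `s_g`: `s_g(t) = 1` iff `Φ_{p,q}(t) = (t mod p, t mod q) ∈ I_{g,p,q}`. -/
def crtSeq (p q : ℕ) (g : ZMod p) (t : ℕ) : ℕ :=
  if ((t : ZMod p), (t : ZMod q)) ∈ crtIdx p q g then 1 else 0

/-- Hamming correlation of two `L`-periodic sequences:
`H_{ab}(τ) = Σ_{t=0}^{L-1} a(t) b(t-τ)`, index `t-τ` computed mod `L`. -/
def hammingCorr (L : ℕ) (a b : ℕ → ℕ) (τ : ℕ) : ℕ :=
  ∑ t ∈ Finset.range L, a t * b ((t + L - τ % L) % L)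

/-- Two-dimensional Hamming cross-correlation
`H_{gh}(τ) = |I_{g,p,q} ∩ (I_{h,p,q} + τ)|` in `Z_p ⊕ Z_q`. -/
def H2 (p q : ℕ) (g h : ZMod p) (τ : ZMod p × ZMod q) : ℕ :=
  (crtIdx p q g ∩ (crtIdx p q h).image (fun x => x + τ)).card

/-- Distribution of the cross-correlation `H_{g1}` over all delay offsets. -/
def Ncross (p q : ℕ) (g : ZMod p) (j : ℕ) : ℕ :=
  ((Finset.range p ×ˢ Finset.range q).filter
    (fun τ => H2 p q g 1 ((τ.1 : ZMod p), (τ.2 : ZMod q)) = j)).card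

lemma count_between (p c l a : ℕ) (hp : 0 < p) :
    l / p ≤ ((Finset.Ico c (c + l)).filter (· ≡ a [MOD p])).card ∧
    ((Finset.Ico c (c + l)).filter (· ≡ a [MOD p])).card ≤ l / p + 1 := by
  obtain ⟨k, hk⟩ : ∃ k, l / p = k := ⟨_, rfl⟩
  have hk1 : p * k ≤ l := hk ▸ Nat.mul_div_le l p
  have hk2 : l < p * k + p := by
    have h1 := Nat.div_add_mod l p
    have h2 := Nat.mod_lt l hp
    rw [hk] at h1
    omega
  rw [hk]
  have h := Nat.Ico_filter_modEq_card c (c + l) hp a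
  set y : ℚ := ((c : ℚ) - a) / p with hy
  have hp' : (0:ℚ) < p := by positivity
  have h2 : (((c + l : ℕ) : ℚ) - a) / p = y + (l:ℚ)/p := by
    field_simp [hy]
    have hpy : (p:ℚ) * y = c - a := by rw [hy]; field_simp
    push_cast; linarith
  rw [h2] at h
  have hfl : ((k : ℕ) : ℚ) ≤ (l:ℚ)/p := by
    rw [le_div_iff₀ hp']
    calc ((k:ℕ):ℚ) * p = ((p * k : ℕ) : ℚ) := by push_cast; ring
      _ ≤ (l:ℚ) := by exact_mod_cast hk1
  have hfu : (l:ℚ)/p ≤ ((k : ℕ) : ℚ) + 1 := by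
    rw [div_le_iff₀ hp']
    calc (l:ℚ) ≤ ((p * k + p : ℕ) : ℚ) := by exact_mod_cast hk2.le
      _ = (((k:ℕ):ℚ) + 1) * p := by push_cast; ring
  have low : ⌈y⌉ + (k : ℤ) ≤ ⌈y + (l:ℚ)/p⌉ := by
    rw [← Int.ceil_add_intCast]
    apply Int.ceil_le_ceil
    have hc : (((k:ℤ)):ℚ) = ((k:ℕ):ℚ) := by norm_cast
    rw [hc]; linarith
  have upp : ⌈y + (l:ℚ)/p⌉ ≤ ⌈y⌉ + (k : ℤ) + 1 := by
    have h4 : ⌈y + (l:ℚ)/p⌉ ≤ ⌈y + (((k+1 : ℕ)) : ℤ)⌉ := by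
      apply Int.ceil_le_ceil
      have hc : ((((k+1:ℕ)):ℤ):ℚ) = ((k:ℕ):ℚ) + 1 := by push_cast; ring
      rw [hc]; linarith
    rw [Int.ceil_add_intCast] at h4
    omega
  have hmax : (⌈y + (l:ℚ)/p⌉ - ⌈y⌉) ⊔ 0 = ⌈y + (l:ℚ)/p⌉ - ⌈y⌉ := by
    apply max_eq_left; omega
  rw [hmax] at h
  constructor <;> omega

lemma floor_sum (p m b : ℕ) (hp : 0 < p) (hb : b < m * p + (p - 1)) :
    b / p + (m * p + (p - 1) - b) / p = m := by
  obtain ⟨u, hu⟩ : ∃ u, b / p = u := ⟨_, rfl⟩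
  have h1 : p * u + b % p = b := by rw [← hu]; exact Nat.div_add_mod b p
  have hr : b % p < p := Nat.mod_lt b hp
  have hum : u ≤ m := by
    by_contra hc
    push_neg at hc
    have : (m + 1) * p ≤ p * u := by
      calc (m+1) * p = p * (m+1) := by ring
        _ ≤ p * u := Nat.mul_le_mul_left p hc
    have : m * p + p ≤ p * u := by nlinarith
    omega
  obtain ⟨v, hv⟩ : ∃ v, u + v = m := ⟨m - u, by omega⟩
  have hpm : m * p = p * u + p * v := by rw [← hv]; ring
  have hsub : m * p + (p - 1) - b = p * v + (p - 1 - b % p) := by omega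
  rw [hu, hsub, Nat.mul_add_div hp, Nat.div_eq_of_lt (by omega)]
  omega

lemma mem_crtIdx (p q : ℕ) [NeZero q] (g : ZMod p) (x : ZMod p × ZMod q) :
    x ∈ crtIdx p q g ↔ x.1 = g * ((x.2.val : ℕ) : ZMod p) := by
  simp only [crtIdx, Finset.mem_image, Finset.mem_range]
  constructor
  · rintro ⟨t, ht, rfl⟩
    simp [ZMod.val_cast_of_lt ht]
  · intro h
    refine ⟨x.2.val, ZMod.val_lt x.2, ?_⟩
    rw [ZMod.natCast_rightInverse x.2, ← h]

lemma H2_eq_filter (p q : ℕ) [NeZero q] (g : ZMod p) (τ : ZMod p × ZMod q) :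
    H2 p q g 1 τ = ((Finset.range q).filter
      (fun t : ℕ => g * ((t : ℕ) : ZMod p)
        = ((((t : ℕ) : ZMod q) - τ.2).val : ZMod p) + τ.1)).card := by
  have hmemS : ∀ x : ZMod p × ZMod q,
      x ∈ (crtIdx p q 1).image (fun y => y + τ) ↔
        x.1 - τ.1 = ((x.2 - τ.2).val : ZMod p) := by
    intro x
    simp only [Finset.mem_image]
    constructor
    · rintro ⟨y, hy, rfl⟩
      rw [mem_crtIdx] at hy
      simpa using hy
    · intro h
      refine ⟨x - τ, ?_, by simp⟩
      rw [mem_crtIdx]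
      simpa using h
  have hinj : Set.InjOn (fun t : ℕ => ((g * (t : ZMod p), (t : ZMod q)) : ZMod p × ZMod q))
      ((Finset.range q).filter
        (fun t : ℕ => (((g * (t : ZMod p), (t : ZMod q)) : ZMod p × ZMod q))
          ∈ (crtIdx p q 1).image (fun y => y + τ)) : Finset ℕ) := by
    intro s hs t ht hst
    simp only [Finset.coe_filter, Set.mem_setOf_eq, Finset.mem_range] at hs ht
    have h1 := congrArg Prod.snd hst
    simp only at h1
    have h2 : ((s : ZMod q)).val = ((t : ZMod q)).val := by rw [h1]
    rwa [ZMod.val_cast_of_lt hs.1, ZMod.val_cast_of_lt ht.1] at h2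
  unfold H2
  show (((Finset.range q).image
      (fun t : ℕ => ((g * (t : ZMod p), (t : ZMod q)) : ZMod p × ZMod q)))
      ∩ (crtIdx p q 1).image (fun y => y + τ)).card = _
  rw [← Finset.filter_mem_eq_inter, Finset.filter_image,
      Finset.card_image_of_injOn hinj]
  congr 1
  apply Finset.filter_congr
  intro t ht
  simp only [Finset.mem_range] at ht
  rw [hmemS]
  simp only
  constructor
  · intro h; rw [← h]; ring
  · intro h; rw [h]; ring

lemma stmt10_aux (p m q : ℕ) (hp : p.Prime) (hm : 0 < m)
    (hqdef : q = m * p + (p - 1))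
    (g : ZMod p) (hg : 2 ≤ g.val) (τ : ZMod p × ZMod q) :
    m ≤ H2 p q g 1 τ ∧ H2 p q g 1 τ ≤ m + 2 := by
  have hp0 : 0 < p := hp.pos
  have hp1 : 1 < p := hp.one_lt
  haveI : Fact (p.Prime) := ⟨hp⟩
  haveI : Fact (1 < p) := ⟨hp1⟩
  have hq0 : 0 < q := by omega
  haveI : NeZero q := ⟨hq0.ne'⟩
  -- g - 1 is nonzero
  have hg1 : g - 1 ≠ 0 := by
    intro h
    have : g = 1 := by rwa [sub_eq_zero] at h
    rw [this, ZMod.val_one] at hg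
    omega
  -- q ≡ -1 mod p
  have hpm1 : ((p - 1 : ℕ) : ZMod p) = -1 := by
    have h1 : ((p - 1 : ℕ) : ZMod p) + 1 = 0 := by
      calc ((p - 1 : ℕ) : ZMod p) + 1 = (((p - 1) + 1 : ℕ) : ZMod p) := by push_cast; ring
        _ = ((p : ℕ) : ZMod p) := by rw [Nat.sub_add_cancel hp1.le]
        _ = 0 := ZMod.natCast_self p
    linear_combination h1
  have hqp : ((q : ℕ) : ZMod p) = -1 := by
    rw [hqdef, Nat.cast_add, Nat.cast_mul, ZMod.natCast_self, mul_zero, zero_add, hpm1]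
  -- setup
  set b : ℕ := τ.2.val with hbdef
  have hb : b < q := ZMod.val_lt τ.2
  have hτ2 : ((b : ℕ) : ZMod q) = τ.2 := ZMod.natCast_rightInverse τ.2
  set a1 : ZMod p := (τ.1 - (b : ZMod p)) / (g - 1) with ha1
  set a2 : ZMod p := (τ.1 - (b : ZMod p) - 1) / (g - 1) with ha2
  have hcastiff : ∀ (x : ZMod p) (t : ℕ), ((t : ZMod p) = x) ↔ t ≡ x.val [MOD p] := by
    intro x t
    rw [← ZMod.natCast_eq_natCast_iff, ZMod.natCast_rightInverse x]
  rw [H2_eq_filter]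
  -- rewrite the filter over [0,b) ∪ [b,q)
  rw [Finset.range_eq_Ico, ← Finset.Ico_union_Ico_eq_Ico (Nat.zero_le b) hb.le,
      Finset.filter_union,
      Finset.card_union_of_disjoint
        (Finset.disjoint_filter_filter (Finset.Ico_disjoint_Ico_consecutive 0 b q))]
  have heq1 : (Finset.Ico 0 b).filter
      (fun t : ℕ => g * ((t : ℕ) : ZMod p)
        = ((((t : ℕ) : ZMod q) - τ.2).val : ZMod p) + τ.1)
      = (Finset.Ico 0 b).filter (· ≡ a2.val [MOD p]) := by
    apply Finset.filter_congr
    intro t ht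
    simp only [Finset.mem_Ico] at ht
    have htb : t < b := ht.2
    have hval : (((t : ℕ) : ZMod q) - τ.2).val = t + q - b := by
      have h1 : ((t : ℕ) : ZMod q) - τ.2 = ((t + q - b : ℕ) : ZMod q) := by
        rw [← hτ2, Nat.cast_sub (by omega : b ≤ t + q), Nat.cast_add,
            ZMod.natCast_self, add_zero]
      rw [h1, ZMod.val_cast_of_lt (by omega)]
    rw [hval]
    have hcast2 : ((t + q - b : ℕ) : ZMod p) = (t : ZMod p) - 1 - (b : ZMod p) := by
      rw [Nat.cast_sub (by omega : b ≤ t + q), Nat.cast_add, hqp]; ring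
    rw [hcast2]
    have hiff : g * ((t : ℕ) : ZMod p) = (t : ZMod p) - 1 - (b : ZMod p) + τ.1
        ↔ (t : ZMod p) = a2 := by
      rw [ha2, eq_div_iff hg1]
      constructor
      · intro h; linear_combination h
      · intro h; linear_combination h
    rw [hiff, hcastiff]
  have heq2 : (Finset.Ico b q).filter
      (fun t : ℕ => g * ((t : ℕ) : ZMod p)
        = ((((t : ℕ) : ZMod q) - τ.2).val : ZMod p) + τ.1)
      = (Finset.Ico b q).filter (· ≡ a1.val [MOD p]) := by
    apply Finset.filter_congr
    intro t ht
    simp only [Finset.mem_Ico] at ht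
    have hval : (((t : ℕ) : ZMod q) - τ.2).val = t - b := by
      have h1 : ((t : ℕ) : ZMod q) - τ.2 = ((t - b : ℕ) : ZMod q) := by
        rw [← hτ2, Nat.cast_sub ht.1]
      rw [h1, ZMod.val_cast_of_lt (by omega)]
    rw [hval]
    have hcast2 : ((t - b : ℕ) : ZMod p) = (t : ZMod p) - (b : ZMod p) :=
      Nat.cast_sub ht.1
    rw [hcast2]
    have hiff : g * ((t : ℕ) : ZMod p) = (t : ZMod p) - (b : ZMod p) + τ.1
        ↔ (t : ZMod p) = a1 := by
      rw [ha1, eq_div_iff hg1]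
      constructor
      · intro h; linear_combination h
      · intro h; linear_combination h
    rw [hiff, hcastiff]
  rw [heq1, heq2]
  -- counting
  have hc1 := count_between p 0 b a2.val hp0
  rw [zero_add] at hc1
  have hc2 := count_between p b (q - b) a1.val hp0
  rw [Nat.add_sub_cancel' hb.le] at hc2
  have hfs : b / p + (q - b) / p = m := hqdef ▸ floor_sum p m b hp0 (hqdef ▸ hb)
  omega


theorem stmt10 (p m : ℕ) (hp : p.Prime) (hodd : Odd p) (hm : 0 < m)
    (g : ZMod p) (hg : 2 ≤ g.val) (τ : ZMod p × ZMod (m * p + (p - 1))) :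
    m ≤ H2 p (m * p + (p - 1)) g 1 τ ∧ H2 p (m * p + (p - 1)) g 1 τ ≤ m + 2 :=
  stmt10_aux p m _ hp hm rfl g hg τ
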